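/- Second-order stochastic relevance implies strict truthfulness gap: if for any distinct a, a' in the range of X_A there exists c with P(X_B | c, a) ≠ P(X_B | c, a'), and θ is a deterministic non-identity map on the support of X_A, then E[KL(P(X_B | C, X_A) ‖ P(X_B | C, θ(X_A)))] > 0, i.e., truthful reporting strictly outperforms the deviation θ. -/

import Mathlib

/-!
Pointwise, `f log (f / g) = (f - g) + g · klFun (f / g)` with `klFun x = x log x + 1 - x ≥ 0`
vanishing only at `x = 1`. Summed over `B`, the linear parts cancel because both conditional
distributions have total mass one, so each conditional KL divergence is nonnegative, and it is
strictly positive as soon as the two conditionals differ. Stochastic relevance supplies such a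
pair `(a, c)` with `a ≠ θ a`, and the weight `P(a, c)` of that term is positive by full support.
-/

open Real Finset InformationTheory

lemma mul_log_div_eq_sub_add_mul_klFun {f g : ℝ} (hg : g ≠ 0) :
    f * log (f / g) = f - g + g * klFun (f / g) := by
  rw [klFun_apply]
  field_simp
  ring

section Gibbs

variable {ι : Type*} [Fintype ι] {f g : ι → ℝ}

lemma sum_mul_log_div_eq_sum_mul_klFun (hg : ∀ i, g i ≠ 0) (hfg : ∑ i, f i = ∑ i, g i) :
    ∑ i, f i * log (f i / g i) = ∑ i, g i * klFun (f i / g i) := by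
  simp only [mul_log_div_eq_sub_add_mul_klFun (hg _), sum_add_distrib, sum_sub_distrib, hfg,
    sub_self, zero_add]

lemma sum_mul_log_div_nonneg (hf : ∀ i, 0 ≤ f i) (hg : ∀ i, 0 < g i)
    (hfg : ∑ i, f i = ∑ i, g i) : 0 ≤ ∑ i, f i * log (f i / g i) := by
  rw [sum_mul_log_div_eq_sum_mul_klFun (fun i => (hg i).ne') hfg]
  exact sum_nonneg fun i _ => mul_nonneg (hg i).le (klFun_nonneg (div_nonneg (hf i) (hg i).le))

lemma sum_mul_log_div_pos (hf : ∀ i, 0 ≤ f i) (hg : ∀ i, 0 < g i)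
    (hfg : ∑ i, f i = ∑ i, g i) (hne : f ≠ g) : 0 < ∑ i, f i * log (f i / g i) := by
  obtain ⟨i₀, hi₀⟩ := Function.ne_iff.1 hne
  have hdiv (i : ι) : 0 ≤ f i / g i := div_nonneg (hf i) (hg i).le
  have hkl₀ : klFun (f i₀ / g i₀) ≠ 0 := by
    rw [Ne, klFun_eq_zero_iff (hdiv i₀), div_eq_one_iff_eq (hg i₀).ne']
    exact hi₀
  rw [sum_mul_log_div_eq_sum_mul_klFun (fun i => (hg i).ne') hfg]
  exact sum_pos' (fun i _ => mul_nonneg (hg i).le (klFun_nonneg (hdiv i)))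
    ⟨i₀, mem_univ _, mul_pos (hg i₀) ((klFun_nonneg (hdiv i₀)).lt_of_ne' hkl₀)⟩

end Gibbs

section Conditional

variable {A B C : Type*} [Fintype B] (p : A × B × C → ℝ)

/-- `P(X_B = b | X_A = a, C = c)` for the joint weights `p`. -/
noncomputable def condDist (a : A) (c : C) (b : B) : ℝ :=
  p (a, b, c) / ∑ b', p (a, b', c)

/-- `KL(P(X_B | a, c) ‖ P(X_B | a', c))`. -/
noncomputable def condKL (a a' : A) (c : C) : ℝ :=
  ∑ b, condDist p a c b * log (condDist p a c b / condDist p a' c b)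

variable {p}

lemma condDist_pos (hp : ∀ w, 0 < p w) (a : A) (c : C) (b : B) : 0 < condDist p a c b :=
  div_pos (hp _) (sum_pos (fun _ _ => hp _) ⟨b, mem_univ b⟩)

lemma sum_condDist [Nonempty B] (hp : ∀ w, 0 < p w) (a : A) (c : C) :
    ∑ b, condDist p a c b = 1 := by
  simp only [condDist]
  rw [← sum_div, div_self (sum_pos (fun _ _ => hp _) univ_nonempty).ne']

lemma condKL_nonneg [Nonempty B] (hp : ∀ w, 0 < p w) (a a' : A) (c : C) :
    0 ≤ condKL p a a' c :=
  sum_mul_log_div_nonneg (fun b => (condDist_pos hp a c b).le) (condDist_pos hp a' c)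
    (by rw [sum_condDist hp, sum_condDist hp])

lemma condKL_pos (hp : ∀ w, 0 < p w) {a a' : A} {c : C}
    (hne : condDist p a c ≠ condDist p a' c) : 0 < condKL p a a' c := by
  obtain ⟨b₀, -⟩ := Function.ne_iff.1 hne
  have : Nonempty B := ⟨b₀⟩
  exact sum_mul_log_div_pos (fun b => (condDist_pos hp a c b).le) (condDist_pos hp a' c)
    (by rw [sum_condDist hp, sum_condDist hp]) hne

end Conditional

theorem stochastic_relevance_strict_truthfulness_gap_general
    (A B C : Type) [Fintype A] [Fintype B] [Fintype C]
    (p : A × B × C → ℝ) (hpos : ∀ w, 0 < p w)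
    (hrel : ∀ a a' : A, a ≠ a' → ∃ c : C,
      (fun b => p (a, b, c) / ∑ b', p (a, b', c)) ≠
        (fun b => p (a', b, c) / ∑ b', p (a', b', c)))
    (θ : A → A) (hθ : ∃ a, θ a ≠ a) :
    0 < ∑ a, ∑ c, (∑ b, p (a, b, c)) *
        ∑ b, (p (a, b, c) / ∑ b', p (a, b', c)) *
          Real.log ((p (a, b, c) / ∑ b', p (a, b', c)) /
            (p (θ a, b, c) / ∑ b', p (θ a, b', c))) := by
  show 0 < ∑ a, ∑ c, (∑ b, p (a, b, c)) * condKL p a (θ a) c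
  obtain ⟨a₀, ha₀⟩ := hθ
  obtain ⟨c₀, hc₀⟩ := hrel a₀ (θ a₀) (Ne.symm ha₀)
  obtain ⟨b₀, -⟩ := Function.ne_iff.1 hc₀
  have : Nonempty B := ⟨b₀⟩
  have hterm (a : A) (c : C) : 0 ≤ (∑ b, p (a, b, c)) * condKL p a (θ a) c :=
    mul_nonneg (sum_nonneg fun _ _ => (hpos _).le) (condKL_nonneg hpos a (θ a) c)
  have hterm₀ : 0 < (∑ b, p (a₀, b, c₀)) * condKL p a₀ (θ a₀) c₀ :=
    mul_pos (sum_pos (fun _ _ => hpos _) univ_nonempty) (condKL_pos hpos hc₀)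
  exact sum_pos' (fun a _ => sum_nonneg fun c _ => hterm a c)
    ⟨a₀, mem_univ _, sum_pos' (fun c _ => hterm a₀ c) ⟨c₀, mem_univ _, hterm₀⟩⟩

/-- **Second-order stochastic relevance implies a strict truthfulness gap.**
Let `X_A, X_B, C` have a full-support joint distribution `p` on finite spaces.
Suppose second-order stochastic relevance holds: for any distinct `a ≠ a'` in the
range of `X_A` there exists `c` with `P(X_B | c, a) ≠ P(X_B | c, a')`.  Then for any
deterministic non-identity map `θ` on the (full) support of `X_A`, the expected
KL divergence `E[KL(P(X_B | C, X_A) ‖ P(X_B | C, θ(X_A)))]` (expectation over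
`(C, X_A)`) is strictly positive, i.e. truthful reporting strictly outperforms the
deviation `θ`. -/
theorem stochastic_relevance_strict_truthfulness_gap
    (A B C : Type) [Fintype A] [Fintype B] [Fintype C]
    (p : A × B × C → ℝ) (hpos : ∀ w, 0 < p w) (hsum : ∑ w, p w = 1)
    (hrel : ∀ a a' : A, a ≠ a' → ∃ c : C,
      (fun b => p (a, b, c) / ∑ b', p (a, b', c)) ≠
        (fun b => p (a', b, c) / ∑ b', p (a', b', c)))
    (θ : A → A) (hθ : ∃ a, θ a ≠ a) :
    0 < ∑ a, ∑ c, (∑ b, p (a, b, c)) *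
        ∑ b, (p (a, b, c) / ∑ b', p (a, b', c)) *
          Real.log ((p (a, b, c) / ∑ b', p (a, b', c)) /
            (p (θ a, b, c) / ∑ b', p (θ a, b', c))) :=
  stochastic_relevance_strict_truthfulness_gap_general A B C p hpos hrel θ hθ
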